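/- For n > 2k, the pmf of the geometric distribution of order k satisfies f_k(n) = q p^k - Σ_{m=2}^{⌊(n+1)/(k+1)⌋} (-1)^m p^{mk} q^{m-1} C(n - mk - 1, m-2) - Σ_{m=2}^{⌊n/(k+1)⌋} (-1)^m p^{mk} q^m C(n - mk - 1, m-1). -/
import Mathlib


open Finset

attribute [local instance] Classical.propDecidable

/-- `hasRunEnd k n ω m` : in the outcome string `ω` of `n` Bernoulli trials, a run of
`k` consecutive successes ends at trial `m` (trials `m-k+1, ..., m` are successes). -/
def hasRunEnd (k n : ℕ) (ω : Fin n → Bool) (m : ℕ) : Prop :=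
  k ≤ m ∧ m ≤ n ∧ ∀ j : Fin n, m - k ≤ (j : ℕ) → (j : ℕ) < m → ω j = true

/-- The first run of `k` consecutive successes is completed exactly at trial `n`. -/
def firstRun (k n : ℕ) (ω : Fin n → Bool) : Prop :=
  hasRunEnd k n ω n ∧ ∀ m < n, ¬ hasRunEnd k n ω m

/-- The pmf of the geometric distribution of order `k`:
`fk k p n = P(N_k = n)` where `N_k` is the waiting time for the first run of `k`
consecutive successes in i.i.d. Bernoulli(`p`) trials; each outcome string contributes
`p^{#successes} (1-p)^{#failures}`. -/
noncomputable def fk (k : ℕ) (p : ℝ) (n : ℕ) : ℝ :=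
  ∑ ω ∈ Finset.univ.filter (fun ω : Fin n → Bool => firstRun k n ω),
    p ^ (Finset.univ.filter (fun i => ω i = true)).card *
      (1 - p) ^ (Finset.univ.filter (fun i => ω i = false)).card

/-! ### Auxiliary development -/

/-- weight of an outcome string -/
noncomputable def wt (p : ℝ) {n : ℕ} (ω : Fin n → Bool) : ℝ :=
  ∏ i, (if ω i = true then p else 1 - p)

lemma wt_eq (p : ℝ) {n : ℕ} (ω : Fin n → Bool) :
    p ^ (Finset.univ.filter (fun i => ω i = true)).card *
      (1 - p) ^ (Finset.univ.filter (fun i => ω i = false)).card = wt p ω := by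
  rw [wt, Finset.prod_ite (fun _ => p) (fun _ => (1:ℝ) - p), Finset.prod_const,
    Finset.prod_const]
  congr 2
  exact congrArg Finset.card (Finset.filter_congr (fun x _ => by simp))

lemma fk_wt (k : ℕ) (p : ℝ) (n : ℕ) :
    fk k p n = ∑ ω ∈ Finset.univ.filter (fun ω : Fin n → Bool => firstRun k n ω), wt p ω :=
  Finset.sum_congr rfl fun ω _ => wt_eq p ω

/-- restriction of a string to its first `N` letters (junk `false` out of range). -/
def res (N : ℕ) {n : ℕ} (ω : Fin n → Bool) : Fin N → Bool :=
  fun j => if h : (j : ℕ) < n then ω ⟨j, h⟩ else false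

lemma res_apply {N n : ℕ} (h : N ≤ n) (ω : Fin n → Bool) (j : Fin N) :
    res N ω j = ω ⟨j, lt_of_lt_of_le j.2 h⟩ := by
  rw [res, dif_pos]

lemma hasRunEnd_res {k m N n : ℕ} (h : N ≤ n) (ω : Fin n → Bool) (hm : m ≤ N) :
    hasRunEnd k n ω m ↔ hasRunEnd k N (res N ω) m := by
  constructor
  · rintro ⟨h1, _, h3⟩
    refine ⟨h1, hm, fun j hj1 hj2 => ?_⟩
    rw [res_apply h]
    exact h3 _ hj1 hj2
  · rintro ⟨h1, _, h3⟩
    refine ⟨h1, le_trans hm h, fun j hj1 hj2 => ?_⟩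
    have hjN : (j : ℕ) < N := lt_of_lt_of_le hj2 hm
    have := h3 ⟨j, hjN⟩ hj1 hj2
    rw [res_apply h] at this
    simpa using this

/-- no success run of length `k` anywhere in the string -/
def noRun (k n : ℕ) (ω : Fin n → Bool) : Prop := ∀ m, ¬ hasRunEnd k n ω m

/-- total weight of strings of length `N` with no `k`-run -/
noncomputable def AA (k : ℕ) (p : ℝ) (N : ℕ) : ℝ :=
  ∑ ω ∈ Finset.univ.filter (fun ω : Fin N → Bool => noRun k N ω), wt p ω

lemma snoc_res {N : ℕ} (ω : Fin (N + 1) → Bool) :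
    Fin.snoc (res N ω) (ω (Fin.last N)) = ω := by
  funext i
  refine Fin.lastCases ?_ (fun j => ?_) i
  · rw [Fin.snoc_last]
  · rw [Fin.snoc_castSucc, res_apply (Nat.le_succ N)]
    exact congrArg ω (Fin.ext rfl)

lemma res_snoc {N : ℕ} (σ : Fin N → Bool) (b : Bool) :
    res N (Fin.snoc σ b : Fin (N+1) → Bool) = σ := by
  funext j
  rw [res_apply (Nat.le_succ N)]
  have : (⟨(j : ℕ), lt_of_lt_of_le j.2 (Nat.le_succ N)⟩ : Fin (N+1)) = Fin.castSucc j :=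
    Fin.ext rfl
  rw [this]
  exact Fin.snoc_castSucc (α := fun _ => Bool) b σ j

lemma wt_snoc (p : ℝ) {N : ℕ} (ω : Fin (N + 1) → Bool) :
    wt p ω = wt p (res N ω) * (if ω (Fin.last N) = true then p else 1 - p) := by
  rw [wt, wt, Fin.prod_univ_castSucc]
  congr 1
  apply Finset.prod_congr rfl
  intro j _
  rw [res_apply (Nat.le_succ N)]
  exact congrArg (fun x => if ω x = true then p else 1 - p) (Fin.ext rfl)

/-- summing out the last letter -/
lemma sum_res (p : ℝ) {N : ℕ} (P : (Fin N → Bool) → Prop) :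
    ∑ ω ∈ Finset.univ.filter (fun ω : Fin (N+1) → Bool => P (res N ω)), wt p ω
      = ∑ σ ∈ Finset.univ.filter (fun σ : Fin N → Bool => P σ), wt p σ := by
  have step : ∑ ω ∈ Finset.univ.filter (fun ω : Fin (N+1) → Bool => P (res N ω)), wt p ω
      = ∑ x ∈ (Finset.univ.filter (fun σ : Fin N → Bool => P σ)) ×ˢ (Finset.univ : Finset Bool),
          wt p x.1 * (if x.2 = true then p else 1 - p) := by
    refine Finset.sum_nbij' (fun ω => (res N ω, ω (Fin.last N)))
      (fun x => Fin.snoc x.1 x.2) ?_ ?_ ?_ ?_ ?_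
    · intro ω hω
      simp only [Finset.mem_filter, Finset.mem_univ, true_and] at hω ⊢
      simp only [Finset.mem_product, Finset.mem_filter, Finset.mem_univ, true_and]
      exact ⟨hω, trivial⟩
    · intro x hx
      simp only [Finset.mem_product, Finset.mem_filter, Finset.mem_univ, true_and] at hx
      simp only [Finset.mem_filter, Finset.mem_univ, true_and]
      rw [res_snoc]
      exact hx.1
    · intro ω _; exact snoc_res ω
    · intro x _
      obtain ⟨σ, b⟩ := x
      simp [Prod.ext_iff, res_snoc, Fin.snoc_last]
    · intro ω _; exact wt_snoc p ω
  rw [step, Finset.sum_product]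
  apply Finset.sum_congr rfl
  intro σ _
  rw [Fintype.sum_bool, if_pos rfl, if_neg (by simp)]
  ring

lemma sum_wt (p : ℝ) : ∀ N, ∑ ω : Fin N → Bool, wt p ω = 1 := by
  intro N
  induction N with
  | zero => simp [wt]
  | succ N ih =>
    have h := sum_res p (fun _ : Fin N → Bool => True)
    simp only [Finset.filter_true] at h
    rw [h, ih]

lemma noRun_res_iff {k N : ℕ} (ω : Fin (N+1) → Bool) :
    noRun k N (res N ω) ↔ (noRun k (N+1) ω ∨ firstRun k (N+1) ω) := by
  constructor
  · intro h
    by_cases hend : hasRunEnd k (N+1) ω (N+1)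
    · right
      refine ⟨hend, fun m hm hr => ?_⟩
      have hmN : m ≤ N := by omega
      exact h m ((hasRunEnd_res (Nat.le_succ N) ω hmN).mp hr)
    · left
      intro m hr
      have hmN1 : m ≤ N + 1 := hr.2.1
      rcases eq_or_lt_of_le hmN1 with rfl | hlt
      · exact hend hr
      · exact h m ((hasRunEnd_res (Nat.le_succ N) ω (by omega)).mp hr)
  · rintro (h | h)
    · intro m hr
      have hmN : m ≤ N := (hr : hasRunEnd k N (res N ω) m).2.1
      exact h m ((hasRunEnd_res (Nat.le_succ N) ω hmN).mpr hr)
    · intro m hr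
      have hmN : m ≤ N := (hr : hasRunEnd k N (res N ω) m).2.1
      exact h.2 m (by omega) ((hasRunEnd_res (Nat.le_succ N) ω hmN).mpr hr)

lemma AA_rec (k : ℕ) (p : ℝ) (N : ℕ) :
    AA k p N = AA k p (N+1) + fk k p (N+1) := by
  rw [AA, ← sum_res p (noRun k N), fk_wt, AA]
  rw [← Finset.sum_union (by
    rw [Finset.disjoint_left]
    intro ω hω1 hω2
    simp only [Finset.mem_filter, Finset.mem_univ, true_and] at hω1 hω2
    exact hω1 (N+1) hω2.1)]
  apply Finset.sum_congr ?_ (fun _ _ => rfl)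
  rw [← Finset.filter_or]
  exact Finset.filter_congr (fun ω _ => noRun_res_iff ω)

lemma fk_zero (k : ℕ) (p : ℝ) {n : ℕ} (h : n < k) : fk k p n = 0 := by
  rw [fk_wt, Finset.filter_false_of_mem, Finset.sum_empty]
  intro ω _ hr
  have := hr.1.1
  omega

lemma AA_small (k : ℕ) (p : ℝ) : ∀ {N : ℕ}, N < k → AA k p N = 1 := by
  intro N hN
  rw [AA, Finset.filter_true_of_mem, sum_wt]
  intro ω _
  intro m hr
  have h1 := hr.1
  have h2 := hr.2.1
  omega

lemma fk_self (k : ℕ) (p : ℝ) : fk k p k = p ^ k := by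
  rw [fk_wt]
  have hset : Finset.univ.filter (fun ω : Fin k → Bool => firstRun k k ω)
      = {fun _ => true} := by
    ext ω
    simp only [Finset.mem_filter, Finset.mem_univ, true_and, Finset.mem_singleton]
    constructor
    · rintro ⟨⟨-, -, h3⟩, -⟩
      funext j
      exact h3 j (by omega) j.2
    · rintro rfl
      exact ⟨⟨le_refl k, le_refl k, fun j _ _ => rfl⟩,
        fun m hm hr => absurd hr.1 (by omega)⟩
  rw [hset, Finset.sum_singleton, wt]
  simp [Finset.prod_const]

lemma AA_k (k : ℕ) (hk : 1 ≤ k) (p : ℝ) : AA k p k = 1 - p ^ k := by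
  obtain ⟨K, rfl⟩ : ∃ K, k = K + 1 := ⟨k - 1, by omega⟩
  have h := AA_rec (K+1) p K
  rw [AA_small (K+1) p (by omega), fk_self] at h
  linarith

lemma firstRun_iff {k N : ℕ} (hk : 1 ≤ k) (ω : Fin (N + (k+1)) → Bool) :
    firstRun k (N + (k+1)) ω ↔
      noRun k N (res N ω) ∧ ω ⟨N, by omega⟩ = false ∧
        ∀ i : Fin (N + (k+1)), N < (i : ℕ) → ω i = true := by
  constructor
  · rintro ⟨⟨-, -, h3⟩, hfirst⟩
    have htail : ∀ i : Fin (N + (k+1)), N < (i : ℕ) → ω i = true := by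
      intro i hi
      exact h3 i (by omega) i.2
    have hmid : ω ⟨N, by omega⟩ = false := by
      by_contra hc
      rw [Bool.not_eq_false] at hc
      refine hfirst (N + k) (by omega) ⟨by omega, by omega, fun j hj1 hj2 => ?_⟩
      rcases Nat.lt_or_ge N (j : ℕ) with h | h
      · exact htail j h
      · have hjN : (j : ℕ) = N := by omega
        rw [show j = ⟨N, by omega⟩ from Fin.ext hjN]
        exact hc
    refine ⟨?_, hmid, htail⟩
    intro m hr
    have hmN : m ≤ N := hr.2.1
    exact hfirst m (by omega) ((hasRunEnd_res (by omega) ω hmN).mpr hr)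
  · rintro ⟨hnr, hmid, htail⟩
    constructor
    · refine ⟨by omega, le_refl _, fun j hj1 _ => ?_⟩
      exact htail j (by omega)
    · intro m hm hr
      obtain ⟨h1, h2, h3⟩ := hr
      rcases le_or_gt m N with hle | hgt
      · exact hnr m ((hasRunEnd_res (by omega) ω hle).mp ⟨h1, h2, h3⟩)
      · have := h3 ⟨N, by omega⟩ (show m - k ≤ N by omega) (show N < m by omega)
        rw [hmid] at this
        exact Bool.false_ne_true this

lemma wt_prefix (p : ℝ) {k N : ℕ} (ω : Fin (N + (k+1)) → Bool)
    (hmid : ω ⟨N, by omega⟩ = false)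
    (htail : ∀ i : Fin (N + (k+1)), N < (i : ℕ) → ω i = true) :
    wt p ω = (1 - p) * p ^ k * wt p (res N ω) := by
  have key : ∀ (n : ℕ) (σ : Fin n → Bool), wt p σ
      = ∏ i ∈ Finset.range n, (if h : i < n then (if σ ⟨i, h⟩ = true then p else 1 - p) else 1) := by
    intro n σ
    rw [wt, ← Fin.prod_univ_eq_prod_range (fun i => if h : i < n then (if σ ⟨i, h⟩ = true then p else 1 - p) else 1) n]
    apply Finset.prod_congr rfl
    intro i _
    rw [dif_pos i.2]
  rw [key, key, Finset.prod_range_add]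
  have h1 : ∏ x ∈ Finset.range N,
      (if h : x < N + (k+1) then (if ω ⟨x, h⟩ = true then p else 1 - p) else 1)
      = ∏ i ∈ Finset.range N, (if h : i < N then (if res N ω ⟨i, h⟩ = true then p else 1 - p) else 1) := by
    apply Finset.prod_congr rfl
    intro i hi
    rw [Finset.mem_range] at hi
    rw [dif_pos hi, dif_pos (by omega : i < N + (k+1))]
    have : res N ω ⟨i, hi⟩ = ω ⟨i, by omega⟩ := res_apply (by omega) ω ⟨i, hi⟩
    rw [this]
  have h2 : ∏ x ∈ Finset.range (k+1),
      (if h : N + x < N + (k+1) then (if ω ⟨N + x, h⟩ = true then p else 1 - p) else 1)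
      = (1 - p) * p ^ k := by
    rw [Finset.prod_range_succ']
    have hz : (if h : N + 0 < N + (k+1) then (if ω ⟨N + 0, h⟩ = true then p else 1 - p) else 1)
        = 1 - p := by
      rw [dif_pos (by omega)]
      rw [show (⟨N + 0, by omega⟩ : Fin (N + (k+1))) = ⟨N, by omega⟩ from Fin.ext rfl]
      rw [hmid]
      simp
    rw [hz]
    have hs : ∀ x ∈ Finset.range k,
        (if h : N + (x+1) < N + (k+1) then (if ω ⟨N + (x+1), h⟩ = true then p else 1 - p) else 1) = p := by
      intro x hx
      rw [Finset.mem_range] at hx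
      rw [dif_pos (by omega), htail ⟨N + (x+1), by omega⟩ (by simp), if_pos rfl]
    rw [Finset.prod_congr rfl hs, Finset.prod_const, Finset.card_range]
    ring
  rw [h1, h2]
  ring

lemma fk_suffix (k : ℕ) (hk : 1 ≤ k) (p : ℝ) (N : ℕ) :
    fk k p (N + (k+1)) = (1 - p) * p ^ k * AA k p N := by
  rw [fk_wt, AA, Finset.mul_sum]
  refine Finset.sum_nbij' (fun ω => res N ω)
    (fun σ => fun i : Fin (N + (k+1)) => if h : (i : ℕ) < N then σ ⟨i, h⟩ else decide (N < (i : ℕ)))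
    ?_ ?_ ?_ ?_ ?_
  · intro ω hω
    simp only [Finset.mem_filter, Finset.mem_univ, true_and] at hω ⊢
    exact ((firstRun_iff hk ω).mp hω).1
  · intro σ hσ
    simp only [Finset.mem_filter, Finset.mem_univ, true_and] at hσ ⊢
    set G : Fin (N + (k+1)) → Bool :=
      fun i => if h : (i : ℕ) < N then σ ⟨i, h⟩ else decide (N < (i : ℕ)) with hG
    have hres : res N G = σ := by
      funext j
      rw [res_apply (by omega), hG]
      simp only
      rw [dif_pos j.2]
    rw [firstRun_iff hk, hres]
    refine ⟨hσ, ?_, ?_⟩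
    · rw [hG]; simp
    · intro i hi
      rw [hG]
      simp only
      rw [dif_neg (by omega)]
      simpa using hi
  · intro ω hω
    simp only [Finset.mem_filter, Finset.mem_univ, true_and] at hω
    obtain ⟨hnr, hmid, htail⟩ := (firstRun_iff hk ω).mp hω
    funext i
    show (if h : (i : ℕ) < N then res N ω ⟨(i : ℕ), h⟩ else decide (N < (i : ℕ))) = ω i
    by_cases h : (i : ℕ) < N
    · rw [dif_pos h, res_apply (by omega : N ≤ N + (k+1))]
    · rw [dif_neg h]
      rcases Nat.lt_or_ge N (i : ℕ) with h2 | h2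
      · rw [htail i h2]
        simpa using h2
      · have hiN : (i : ℕ) = N := by omega
        rw [show i = ⟨N, by omega⟩ from Fin.ext hiN, hmid]
        simp [hiN]
  · intro σ hσ
    funext j
    show res N (fun i : Fin (N + (k+1)) =>
      if h : (i : ℕ) < N then σ ⟨(i : ℕ), h⟩ else decide (N < (i : ℕ))) j = σ j
    rw [res_apply (by omega : N ≤ N + (k+1))]
    simp only
    rw [dif_pos j.2]
  · intro ω hω
    simp only [Finset.mem_filter, Finset.mem_univ, true_and] at hω
    obtain ⟨hnr, hmid, htail⟩ := (firstRun_iff hk ω).mp hω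
    exact wt_prefix p ω hmid htail

lemma AA_step (k : ℕ) (hk : 1 ≤ k) (p : ℝ) (M : ℕ) :
    AA k p (M + k + 1) = AA k p (M + k) - (1 - p) * p ^ k * AA k p M := by
  have h1 := AA_rec k p (M + k)
  have h2 := fk_suffix k hk p M
  rw [show M + (k+1) = M + k + 1 by omega] at h2
  rw [h2] at h1
  linarith

/-- closed-form alternating sum -/
noncomputable def BB (k : ℕ) (p : ℝ) (N : ℕ) : ℝ :=
  ∑ j ∈ Finset.range (N + 1), (-((1 - p) * p ^ k)) ^ j * ((N - j * k).choose j : ℝ)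

lemma BB_ext (k : ℕ) (p : ℝ) (N T : ℕ) (hT : N + 1 ≤ T) :
    ∑ j ∈ Finset.range T, (-((1 - p) * p ^ k)) ^ j * ((N - j * k).choose j : ℝ) = BB k p N := by
  rw [BB]
  symm
  apply Finset.sum_subset (Finset.range_subset_range.mpr hT)
  intro j hj hnj
  rw [Finset.mem_range] at hj hnj
  have hNj : N < j := by omega
  have : (N - j * k).choose j = 0 :=
    Nat.choose_eq_zero_of_lt (lt_of_le_of_lt (Nat.sub_le _ _) hNj)
  rw [this]
  simp

lemma BB_small (k : ℕ) (p : ℝ) {N : ℕ} (hN : N ≤ k) : BB k p N = 1 := by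
  rw [BB, Finset.sum_eq_single 0]
  · simp
  · intro j _ hj
    have hj1 : 1 ≤ j := by omega
    have : N - j * k = 0 := by
      have : k ≤ j * k := Nat.le_mul_of_pos_left k (by omega)
      omega
    rw [this, Nat.choose_eq_zero_of_lt (by omega)]
    simp
  · intro h
    simp at h

lemma BB_rec (k : ℕ) (p : ℝ) (M : ℕ) (hM : k ≤ M) :
    BB k p (M + 1) = BB k p M - (1 - p) * p ^ k * BB k p (M - k) := by
  have pas : ∀ j : ℕ, ((M + 1 - (j + 1) * k).choose (j + 1) : ℝ)
      = ((M - (j + 1) * k).choose (j + 1) : ℝ) + (((M - k) - j * k).choose j : ℝ) := by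
    intro j
    obtain ⟨a, ha⟩ : ∃ a, j * k = a := ⟨_, rfl⟩
    have ha2 : (j + 1) * k = a + k := by rw [add_mul, one_mul, ha]
    rw [ha, ha2]
    rcases le_or_gt (a + k) M with h | h
    · have e1 : M + 1 - (a + k) = (M - (a + k)) + 1 := by omega
      have e2 : M - k - a = M - (a + k) := by omega
      rw [e1, e2, Nat.choose_succ_succ]
      push_cast
      ring
    · rcases Nat.eq_zero_or_pos j with rfl | hj
      · have : a = 0 := by
          rw [← ha, Nat.zero_mul]
        omega
      · have e1 : M + 1 - (a + k) = 0 ∨ (M + 1 - (a + k)) < j + 1 := by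
          rcases le_or_gt (M + 1) (a + k) with h2 | h2
          · left; omega
          · right; omega
        have l1 : (M + 1 - (a + k)).choose (j + 1) = 0 := by
          apply Nat.choose_eq_zero_of_lt
          omega
        have l2 : (M - (a + k)).choose (j + 1) = 0 := by
          apply Nat.choose_eq_zero_of_lt
          have : M - (a + k) = 0 := by omega
          omega
        have l3 : (M - k - a).choose j = 0 := by
          apply Nat.choose_eq_zero_of_lt
          have : M - k - a = 0 := by omega
          omega
        rw [l1, l2, l3]
        simp
  set d : ℝ := -((1 - p) * p ^ k) with hd
  have expand : BB k p (M + 1)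
      = ∑ i ∈ Finset.range (M + 1), d ^ (i + 1) * ((M + 1 - (i + 1) * k).choose (i + 1) : ℝ)
        + d ^ 0 * ((M + 1 - 0 * k).choose 0 : ℝ) := by
    rw [BB, Finset.sum_range_succ' (fun j => d ^ j * ((M + 1 - j * k).choose j : ℝ)) (M + 1)]
  rw [expand]
  have split : ∑ i ∈ Finset.range (M + 1), d ^ (i + 1) * ((M + 1 - (i + 1) * k).choose (i + 1) : ℝ)
      = ∑ i ∈ Finset.range (M + 1), d ^ (i + 1) * ((M - (i + 1) * k).choose (i + 1) : ℝ)
        + ∑ i ∈ Finset.range (M + 1), d ^ (i + 1) * (((M - k) - i * k).choose i : ℝ) := by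
    rw [← Finset.sum_add_distrib]
    apply Finset.sum_congr rfl
    intro i _
    rw [pas i]
    ring
  rw [split]
  have part1 : ∑ i ∈ Finset.range (M + 1), d ^ (i + 1) * ((M - (i + 1) * k).choose (i + 1) : ℝ)
        + d ^ 0 * ((M + 1 - 0 * k).choose 0 : ℝ)
      = BB k p M := by
    have : ∑ j ∈ Finset.range (M + 2), d ^ j * ((M - j * k).choose j : ℝ) = BB k p M :=
      BB_ext k p M (M + 2) (by omega)
    rw [← this, Finset.sum_range_succ' (fun j => d ^ j * ((M - j * k).choose j : ℝ)) (M + 1)]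
    simp
  have part2 : ∑ i ∈ Finset.range (M + 1), d ^ (i + 1) * (((M - k) - i * k).choose i : ℝ)
      = d * BB k p (M - k) := by
    rw [← BB_ext k p (M - k) (M + 1) (by omega), Finset.mul_sum]
    apply Finset.sum_congr rfl
    intro i _
    ring
  calc ∑ i ∈ Finset.range (M + 1), d ^ (i + 1) * ((M - (i + 1) * k).choose (i + 1) : ℝ)
        + ∑ i ∈ Finset.range (M + 1), d ^ (i + 1) * (((M - k) - i * k).choose i : ℝ)
        + d ^ 0 * ((M + 1 - 0 * k).choose 0 : ℝ)
      = (∑ i ∈ Finset.range (M + 1), d ^ (i + 1) * ((M - (i + 1) * k).choose (i + 1) : ℝ)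
        + d ^ 0 * ((M + 1 - 0 * k).choose 0 : ℝ))
        + ∑ i ∈ Finset.range (M + 1), d ^ (i + 1) * (((M - k) - i * k).choose i : ℝ) := by ring
    _ = BB k p M + d * BB k p (M - k) := by rw [part1, part2]
    _ = BB k p M - (1 - p) * p ^ k * BB k p (M - k) := by rw [hd]; ring

lemma AA_eq (k : ℕ) (hk : 1 ≤ k) (p : ℝ) :
    ∀ N, k ≤ N → AA k p N = BB k p N - p ^ k * BB k p (N - k) := by
  intro N
  induction N using Nat.strong_induction_on with
  | _ N ih =>
    intro hN
    rcases eq_or_lt_of_le hN with h | h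
    · subst h
      rw [AA_k k hk p, Nat.sub_self, BB_small k p (le_refl k), BB_small k p (Nat.zero_le k)]
      ring
    · obtain ⟨M, rfl⟩ : ∃ M, N = M + k + 1 := ⟨N - k - 1, by omega⟩
      rw [AA_step k hk p M]
      have e1 : M + k + 1 - k = M + 1 := by omega
      have e2 : M + k - k = M := by omega
      have hBrec : BB k p (M + k + 1) = BB k p (M + k) - (1 - p) * p ^ k * BB k p M := by
        have := BB_rec k p (M + k) (by omega)
        rwa [e2] at this
      have hAAMk : AA k p (M + k) = BB k p (M + k) - p ^ k * BB k p M := by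
        have := ih (M + k) (by omega) (by omega)
        rwa [e2] at this
      rw [e1, hBrec, hAAMk]
      rcases lt_or_ge M k with hMk | hMk
      · -- small case : M < k
        rw [AA_small k p hMk, BB_small k p (by omega : M + 1 ≤ k),
          BB_small k p (le_of_lt hMk)]
        ring
      · -- big case : k ≤ M
        have hAAM : AA k p M = BB k p M - p ^ k * BB k p (M - k) := ih M (by omega) hMk
        have hBrecM : BB k p (M + 1) = BB k p M - (1 - p) * p ^ k * BB k p (M - k) :=
          BB_rec k p M hMk
        rw [hAAM, hBrecM]
        ring

/-- For `n > 2k`,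
`f_k(n) = q p^k - Σ_{m=2}^{⌊(n+1)/(k+1)⌋} (-1)^m p^{mk} q^{m-1} C(n-mk-1, m-2)
        - Σ_{m=2}^{⌊n/(k+1)⌋} (-1)^m p^{mk} q^m C(n-mk-1, m-1)`. -/
theorem pmf_formula_mane (k : ℕ) (hk : 1 ≤ k) (p q : ℝ) (hp0 : 0 < p) (hp1 : p < 1)
    (hq : q = 1 - p) (n : ℕ) (hn : 2 * k < n) :
    fk k p n = q * p ^ k
      - ∑ m ∈ Finset.Icc 2 ((n + 1) / (k + 1)),
          (-1 : ℝ) ^ m * p ^ (m * k) * q ^ (m - 1) * ((n - m * k - 1).choose (m - 2))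
      - ∑ m ∈ Finset.Icc 2 (n / (k + 1)),
          (-1 : ℝ) ^ m * p ^ (m * k) * q ^ m * ((n - m * k - 1).choose (m - 1)) := by
  subst hq
  obtain ⟨N, rfl⟩ : ∃ N, n = N + k + 1 := ⟨n - k - 1, by omega⟩
  have hNk : k ≤ N := by omega
  have hfk : fk k p (N + k + 1) = (1 - p) * p ^ k * (BB k p N - p ^ k * BB k p (N - k)) := by
    have h1 := fk_suffix k hk p N
    rw [show N + (k + 1) = N + k + 1 by omega] at h1
    rw [h1, AA_eq k hk p N hNk]
  have hS1 : ∑ m ∈ Finset.Icc 2 ((N + k + 1 + 1) / (k + 1)),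
      (-1 : ℝ) ^ m * p ^ (m * k) * (1 - p) ^ (m - 1) * ((N + k + 1 - m * k - 1).choose (m - 2))
      = (1 - p) * p ^ (2 * k) * BB k p (N - k) := by
    have hsub : Finset.Icc 2 ((N + k + 1 + 1) / (k + 1)) ⊆ Finset.Icc 2 (N + k + 1 + 1) :=
      Finset.Icc_subset_Icc_right (Nat.div_le_self _ _)
    have hvan : ∀ m ∈ Finset.Icc 2 (N + k + 1 + 1),
        m ∉ Finset.Icc 2 ((N + k + 1 + 1) / (k + 1)) →
        (-1 : ℝ) ^ m * p ^ (m * k) * (1 - p) ^ (m - 1) * ((N + k + 1 - m * k - 1).choose (m - 2))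
          = 0 := by
      intro m hm hnm
      rw [Finset.mem_Icc] at hm
      have hgt : (N + k + 1 + 1) / (k + 1) < m := by
        by_contra hcon
        exact hnm (Finset.mem_Icc.mpr ⟨hm.1, by omega⟩)
      have hlt : N + k + 1 + 1 < m * (k + 1) := (Nat.div_lt_iff_lt_mul (by omega)).mp hgt
      obtain ⟨a, ha⟩ : ∃ a, m * k = a := ⟨_, rfl⟩
      have ha2 : m * (k + 1) = a + m := by rw [mul_add, mul_one, ha]
      rw [ha2] at hlt
      have hchoose : (N + k + 1 - m * k - 1).choose (m - 2) = 0 := by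
        rw [ha]
        apply Nat.choose_eq_zero_of_lt
        rcases Nat.lt_or_ge m 3 with hm2 | hm3
        · exfalso
          have hm2' : m = 2 := by omega
          have haa : a = 2 * k := by rw [← ha, hm2']
          omega
        · omega
      rw [hchoose]
      simp
    rw [Finset.sum_subset hsub hvan, ← Finset.Ico_add_one_right_eq_Icc, Finset.sum_Ico_eq_sum_range]
    rw [show N + k + 1 + 1 + 1 - 2 = N + k + 1 by omega]
    rw [← BB_ext k p (N - k) (N + k + 1) (by omega), Finset.mul_sum]
    apply Finset.sum_congr rfl
    intro i _
    have e2 : 2 + i - 2 = i := by omega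
    have e1 : 2 + i - 1 = i + 1 := by omega
    have eidx : N + k + 1 - (2 + i) * k - 1 = N - k - i * k := by
      obtain ⟨a, ha⟩ : ∃ a, i * k = a := ⟨_, rfl⟩
      have h2 : (2 + i) * k = a + 2 * k := by rw [← ha]; ring
      rw [h2, ha]
      omega
    rw [e2, e1, eidx, neg_pow ((1 - p) * p ^ k) i, mul_pow, ← pow_mul]
    ring
  have hS2 : ∑ m ∈ Finset.Icc 2 ((N + k + 1) / (k + 1)),
      (-1 : ℝ) ^ m * p ^ (m * k) * (1 - p) ^ m * ((N + k + 1 - m * k - 1).choose (m - 1))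
      = (1 - p) * p ^ k - (1 - p) * p ^ k * BB k p N := by
    have hsub : Finset.Icc 2 ((N + k + 1) / (k + 1)) ⊆ Finset.Icc 2 (N + k + 1 + 1) :=
      Finset.Icc_subset_Icc_right (le_trans (Nat.div_le_self _ _) (by omega))
    have hvan : ∀ m ∈ Finset.Icc 2 (N + k + 1 + 1),
        m ∉ Finset.Icc 2 ((N + k + 1) / (k + 1)) →
        (-1 : ℝ) ^ m * p ^ (m * k) * (1 - p) ^ m * ((N + k + 1 - m * k - 1).choose (m - 1))
          = 0 := by
      intro m hm hnm
      rw [Finset.mem_Icc] at hm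
      have hgt : (N + k + 1) / (k + 1) < m := by
        by_contra hcon
        exact hnm (Finset.mem_Icc.mpr ⟨hm.1, by omega⟩)
      have hlt : N + k + 1 < m * (k + 1) := (Nat.div_lt_iff_lt_mul (by omega)).mp hgt
      obtain ⟨a, ha⟩ : ∃ a, m * k = a := ⟨_, rfl⟩
      have ha2 : m * (k + 1) = a + m := by rw [mul_add, mul_one, ha]
      rw [ha2] at hlt
      have hchoose : (N + k + 1 - m * k - 1).choose (m - 1) = 0 := by
        rw [ha]
        apply Nat.choose_eq_zero_of_lt
        omega
      rw [hchoose]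
      simp
    rw [Finset.sum_subset hsub hvan]
    have hbot : ∑ m ∈ Finset.Ico 1 (N + k + 1 + 1 + 1),
        (-1 : ℝ) ^ m * p ^ (m * k) * (1 - p) ^ m * ((N + k + 1 - m * k - 1).choose (m - 1))
        = (-1 : ℝ) ^ 1 * p ^ (1 * k) * (1 - p) ^ 1 * ((N + k + 1 - 1 * k - 1).choose (1 - 1))
          + ∑ m ∈ Finset.Icc 2 (N + k + 1 + 1),
            (-1 : ℝ) ^ m * p ^ (m * k) * (1 - p) ^ m * ((N + k + 1 - m * k - 1).choose (m - 1)) := by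
      rw [← Finset.Ico_add_one_right_eq_Icc]
      exact Finset.sum_eq_sum_Ico_succ_bot (by omega) _
    have hfull : ∑ m ∈ Finset.Ico 1 (N + k + 1 + 1 + 1),
        (-1 : ℝ) ^ m * p ^ (m * k) * (1 - p) ^ m * ((N + k + 1 - m * k - 1).choose (m - 1))
        = -((1 - p) * p ^ k) * BB k p N := by
      rw [Finset.sum_Ico_eq_sum_range]
      rw [show N + k + 1 + 1 + 1 - 1 = N + k + 2 by omega]
      rw [← BB_ext k p N (N + k + 2) (by omega), Finset.mul_sum]
      apply Finset.sum_congr rfl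
      intro i _
      have e1 : 1 + i - 1 = i := by omega
      have eidx : N + k + 1 - (1 + i) * k - 1 = N - i * k := by
        obtain ⟨a, ha⟩ : ∃ a, i * k = a := ⟨_, rfl⟩
        have h2 : (1 + i) * k = a + k := by rw [← ha]; ring
        rw [h2, ha]
        omega
      rw [e1, eidx, neg_pow ((1 - p) * p ^ k) i, mul_pow, ← pow_mul]
      ring
    have : ∑ m ∈ Finset.Icc 2 (N + k + 1 + 1),
        (-1 : ℝ) ^ m * p ^ (m * k) * (1 - p) ^ m * ((N + k + 1 - m * k - 1).choose (m - 1))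
        = -((1 - p) * p ^ k) * BB k p N
          - (-1 : ℝ) ^ 1 * p ^ (1 * k) * (1 - p) ^ 1 * ((N + k + 1 - 1 * k - 1).choose (1 - 1)) := by
      rw [← hfull, hbot]
      ring
    rw [this]
    rw [show (N + k + 1 - 1 * k - 1).choose (1 - 1) = 1 by
      rw [show 1 - 1 = 0 by omega, Nat.choose_zero_right]]
    push_cast
    ring
  rw [hfk, hS1, hS2]
  ring
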